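/- arXiv:2508.16353 — 2 statements merged into one kernel-verified Lean document; each statement's English description precedes it below -/
import Mathlib

section
/- Decay of the ground state at the potential site (Remark 3.2): for H_{k,α} = L_k + α δ_0 with α > 0, there is a constant c > 0 such that for all but finitely many k, the normalized positive ground state satisfies φ_k(0) ≤ c α^{-1} k^{-3/2}. -/
/-!
Summing the eigenvalue equation `H φ = λ φ` over all vertices kills the Laplacian, whose columns
sum to zero, so `α φ(0) = λ ∑ φ`, and `∑ φ ≤ √(2k+1)` by Cauchy–Schwarz. Since `φ` is a positive
eigenvector of a symmetric matrix, `λ ≤ μ` whenever `H w ≤ μ w` for some nonnegative `w ≠ 0`.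
The folded sine `w(j) = sin(π|j|/(2k+1))` vanishes at the potential site, so it does not see `α`,
and gives `λ ≤ 2 - 2cos(π/(2k+1)) ≤ π²/(2k+1)²`. Hence `φ(0) ≤ π² α⁻¹ (2k+1)^{-3/2}`.
-/

open Finset Filter Topology Matrix

/-- The (Neumann) discrete Laplacian matrix of the path graph with `n` vertices. -/
noncomputable def pathLap (n : ℕ) : Matrix (Fin n) (Fin n) ℝ :=
  Matrix.of fun i j =>
    if i = j then (if i.val = 0 ∨ i.val = n - 1 then (1 : ℝ) else 2)
    else if i.val + 1 = j.val ∨ j.val + 1 = i.val then -1 else 0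

/-- The diagonal potential matrix: vertex `i` of `Fin (2k+1)` represents the integer `i - k`. -/
noncomputable def potMat (k : ℕ) (α : ℤ → ℝ) : Matrix (Fin (2*k+1)) (Fin (2*k+1)) ℝ :=
  Matrix.diagonal fun i => α ((i : ℤ) - k)

/-- The discrete Schrödinger operator `H_{k,α} = L_k + Σ_j α_j δ_j` on the path `{-k,…,k}`. -/
noncomputable def Hmat (k : ℕ) (α : ℤ → ℝ) : Matrix (Fin (2*k+1)) (Fin (2*k+1)) ℝ :=
  pathLap (2*k+1) + potMat k α

/-- The set of eigenvalues of a real matrix. -/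
def evs {n : ℕ} (M : Matrix (Fin n) (Fin n) ℝ) : Set ℝ :=
  {μ | ∃ f : Fin n → ℝ, f ≠ 0 ∧ M.mulVec f = μ • f}

/-- Lowest eigenvalue. -/
noncomputable def lam0 {n : ℕ} (M : Matrix (Fin n) (Fin n) ℝ) : ℝ := sInf (evs M)

/-- Second-lowest eigenvalue (lowest eigenvalue above the ground state energy). -/
noncomputable def lam1 {n : ℕ} (M : Matrix (Fin n) (Fin n) ℝ) : ℝ :=
  sInf (evs M \ {lam0 M})

/-- Spectral gap. -/
noncomputable def gap {n : ℕ} (M : Matrix (Fin n) (Fin n) ℝ) : ℝ := lam1 M - lam0 M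

/-- `λ_0(V_m, ∞δ_0) = 2 - 2cos(π/(2m+1))`, the Dirichlet ground state energy. -/
noncomputable def dirEVZ (m : ℤ) : ℝ := 2 - 2 * Real.cos (Real.pi / (2 * m + 1))

/-- Index of the integer vertex `j ∈ {-k,…,k}` inside `Fin (2k+1)`. -/
def idx (k : ℕ) (j : ℤ) : Fin (2*k+1) := ⟨(j + k).toNat % (2*k+1), Nat.mod_lt _ (by omega)⟩

/-- `φ` is the normalized strictly positive ground state of `H_{k,α}`. -/
noncomputable def isGS (k : ℕ) (α : ℤ → ℝ) (φ : Fin (2*k+1) → ℝ) : Prop :=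
  (Hmat k α).mulVec φ = lam0 (Hmat k α) • φ ∧ (∑ i, φ i ^ 2 = 1) ∧ ∀ i, 0 < φ i

/-- The single-site potential `α δ_0`. -/
noncomputable def single0 (α : ℝ) : ℤ → ℝ := fun j => if j = 0 then α else 0

open Real

theorem pathLap_isSymm (n : ℕ) : (pathLap n).IsSymm := by
  ext i j
  simp only [transpose_apply, pathLap, of_apply, Fin.ext_iff]
  split_ifs <;> first | rfl | omega

theorem sum_fin_ite_val_eq {n : ℕ} (m : ℕ) (g : ℕ → ℝ) :
    ∑ j : Fin n, (if (j : ℕ) = m then g j else 0) = if m < n then g m else 0 := by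
  rw [Fin.sum_univ_eq_sum_range (fun j => if j = m then g j else 0), sum_ite_eq']
  simp only [mem_range]

theorem pathLap_mul_eq_ite {n : ℕ} (hn : 2 ≤ n) (f : ℤ → ℝ) (i j : Fin n) :
    pathLap n i j * f (j : ℕ) =
      (if j = i then (2 - (if (i : ℕ) = 0 then 1 else 0)
        - (if (i : ℕ) = n - 1 then 1 else 0)) * f (i : ℕ) else 0)
      - (if (j : ℕ) = (i : ℕ) + 1 then f (j : ℕ) else 0)
      - (if (j : ℕ) = (i : ℕ) - 1 ∧ (i : ℕ) ≠ 0 then f (j : ℕ) else 0) := by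
  rcases eq_or_ne j i with rfl | hji
  · simp only [pathLap, of_apply]
    split_ifs <;> first | (exfalso; omega) | ring
  · have : (j : ℕ) ≠ i := Fin.val_ne_of_ne hji
    simp only [pathLap, of_apply, Ne.symm hji, hji]
    split_ifs <;> first | (exfalso; omega) | ring

theorem pathLap_mulVec_apply {n : ℕ} (hn : 2 ≤ n) {f : ℤ → ℝ} (h₀ : f (-1) = f 0)
    (h₁ : f n = f (n - 1)) (i : Fin n) :
    (pathLap n *ᵥ fun j => f (j : ℕ)) i = 2 * f (i : ℕ) - f ((i : ℕ) - 1) - f ((i : ℕ) + 1) := by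
  simp only [mulVec, dotProduct, pathLap_mul_eq_ite hn, sum_sub_distrib, sum_ite_eq', mem_univ,
    if_true]
  rw [sum_fin_ite_val_eq (i + 1) fun m => f m]
  have hi := i.isLt
  by_cases h0 : (i : ℕ) = 0
  · simp only [h0, ne_eq, not_true_eq_false, and_false, if_false, sum_const_zero, if_true]
    rw [if_neg (show 0 ≠ n - 1 by omega), if_pos (show 0 + 1 < n by omega)]
    push_cast
    rw [h₀]
    ring
  · simp only [h0, ne_eq, not_false_eq_true, and_true, if_false]
    rw [sum_fin_ite_val_eq (i - 1) fun m => f m]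
    rw [if_pos (show (i : ℕ) - 1 < n by omega), Nat.cast_sub (show 1 ≤ (i : ℕ) by omega)]
    push_cast
    by_cases hl : (i : ℕ) = n - 1
    · have hn' : ((i : ℕ) : ℤ) + 1 = n := by omega
      rw [if_pos hl, if_neg (show ¬ (i : ℕ) + 1 < n by omega), hn', h₁, ← hn',
        add_sub_cancel_right]
      ring
    · rw [if_neg hl, if_pos (show (i : ℕ) + 1 < n by omega)]
      ring

theorem pathLap_mulVec_one {n : ℕ} (hn : 2 ≤ n) : pathLap n *ᵥ 1 = 0 := by
  funext i
  have h := pathLap_mulVec_apply hn (f := fun _ => 1) rfl rfl i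
  norm_num at h
  exact h

theorem sum_pathLap_mulVec {n : ℕ} (hn : 2 ≤ n) (v : Fin n → ℝ) :
    ∑ i, (pathLap n *ᵥ v) i = 0 := by
  rw [← one_dotProduct, dotProduct_mulVec, ← mulVec_transpose, pathLap_isSymm n,
    pathLap_mulVec_one hn, zero_dotProduct]

theorem Hmat_isSymm (k : ℕ) (a : ℤ → ℝ) : (Hmat k a).IsSymm :=
  (pathLap_isSymm _).add (isSymm_diagonal _)

theorem Hmat_mulVec_apply (k : ℕ) (a : ℤ → ℝ) (v : Fin (2 * k + 1) → ℝ) (i : Fin (2 * k + 1)) :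
    (Hmat k a *ᵥ v) i = (pathLap (2 * k + 1) *ᵥ v) i + a ((i : ℤ) - k) * v i := by
  rw [Hmat, potMat, add_mulVec, Pi.add_apply, mulVec_diagonal]

theorem sum_Hmat_mulVec {k : ℕ} (hk : 1 ≤ k) (a : ℤ → ℝ) (v : Fin (2 * k + 1) → ℝ) :
    ∑ i, (Hmat k a *ᵥ v) i = ∑ i : Fin (2 * k + 1), a ((i : ℤ) - k) * v i := by
  simp only [Hmat_mulVec_apply, sum_add_distrib, sum_pathLap_mulVec (by omega : 2 ≤ 2 * k + 1),
    zero_add]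

theorem sum_single0_mul (k : ℕ) (α : ℝ) (v : Fin (2 * k + 1) → ℝ) :
    ∑ i : Fin (2 * k + 1), single0 α ((i : ℤ) - k) * v i = α * v (idx k 0) := by
  have hidx : idx k 0 = ⟨k, by omega⟩ := by
    ext
    simp [idx, Nat.mod_eq_of_lt (show k < 2 * k + 1 by omega)]
  rw [hidx, sum_eq_single_of_mem (⟨k, by omega⟩ : Fin (2 * k + 1)) (mem_univ _)]
  · simp [single0]
  · intro i _ hi
    have : (i : ℤ) - k ≠ 0 := fun h => hi (Fin.ext (show (i : ℕ) = k by omega))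
    simp [single0, this]

theorem eigenvalue_le_of_mulVec_le {ι : Type*} [Fintype ι] {H : Matrix ι ι ℝ} (hH : H.IsSymm)
    {φ w : ι → ℝ} {lam μ : ℝ} (hφ : H *ᵥ φ = lam • φ) (hφ_pos : ∀ i, 0 < φ i) (hw_nonneg : 0 ≤ w)
    (hw : w ≠ 0) (hHw : H *ᵥ w ≤ μ • w) : lam ≤ μ := by
  have hwφ : 0 < w ⬝ᵥ φ := by
    obtain ⟨i, hi⟩ := Function.ne_iff.mp hw
    exact sum_pos' (fun j _ => mul_nonneg (hw_nonneg j) (hφ_pos j).le)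
      ⟨i, mem_univ i, mul_pos ((hw_nonneg i).lt_of_ne' hi) (hφ_pos i)⟩
  refine le_of_mul_le_mul_right ?_ hwφ
  calc lam * (w ⬝ᵥ φ) = (H *ᵥ w) ⬝ᵥ φ := by
        rw [← hH.eq, mulVec_transpose, ← dotProduct_mulVec, hφ, dotProduct_smul, smul_eq_mul]
    _ ≤ (μ • w) ⬝ᵥ φ := sum_le_sum fun i _ => mul_le_mul_of_nonneg_right (hHw i) (hφ_pos i).le
    _ = μ * (w ⬝ᵥ φ) := by rw [smul_dotProduct, smul_eq_mul]

theorem sin_mul_abs_second_diff_le {θ : ℝ} (hθ : 0 ≤ sin θ) (j : ℤ) :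
    2 * sin (θ * |(j : ℝ)|) - sin (θ * |((j - 1 : ℤ) : ℝ)|)
      - sin (θ * |((j + 1 : ℤ) : ℝ)|) ≤ (2 - 2 * cos θ) * sin (θ * |(j : ℝ)|) := by
  push_cast
  rcases lt_trichotomy j 0 with hj | rfl | hj
  · have hj' : (j : ℝ) ≤ -1 := by exact_mod_cast (show j ≤ -1 by omega)
    rw [abs_of_neg (by linarith), abs_of_neg (by linarith), abs_of_nonpos (by linarith)]
    rw [show θ * -((j : ℝ) - 1) = θ * -j + θ by ring, show θ * -((j : ℝ) + 1) = θ * -j - θ by ring,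
      Real.sin_add, Real.sin_sub]
    apply le_of_eq
    ring
  · simp
    linarith
  · have hj' : (1 : ℝ) ≤ j := by exact_mod_cast (show 1 ≤ j by omega)
    rw [abs_of_pos (by linarith), abs_of_nonneg (by linarith), abs_of_pos (by linarith)]
    rw [show θ * ((j : ℝ) - 1) = θ * j - θ by ring, show θ * ((j : ℝ) + 1) = θ * j + θ by ring,
      Real.sin_add, Real.sin_sub]
    apply le_of_eq
    ring

/-- `sin(θ|j|)` with `θ = π/(2k+1)`: the Dirichlet ground state of `{-k,…,k}` with the site `0`
removed. Since `θ(k+1) = π - θk` it is also even about `±(k + 1/2)`, which is the Neumann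
condition at the ends of the path. -/
noncomputable def dirichletMode (k : ℕ) (j : ℤ) : ℝ := sin (π / (2 * k + 1) * |(j : ℝ)|)

theorem dirichletMode_zero (k : ℕ) : dirichletMode k 0 = 0 := by
  simp [dirichletMode]

theorem dirichletMode_succ (k : ℕ) : dirichletMode k (k + 1) = dirichletMode k k := by
  rw [dirichletMode, dirichletMode, ← Real.sin_pi_sub]
  congr 1
  push_cast
  rw [abs_of_nonneg (by positivity), abs_of_nonneg (by positivity)]
  field_simp
  ring

theorem dirichletMode_neg (k : ℕ) (j : ℤ) : dirichletMode k (-j) = dirichletMode k j := by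
  simp [dirichletMode]

theorem dirichletMode_nonneg {k : ℕ} {j : ℤ} (hj : |j| ≤ k) : 0 ≤ dirichletMode k j := by
  have hj' : |(j : ℝ)| ≤ k := by exact_mod_cast hj
  refine Real.sin_nonneg_of_nonneg_of_le_pi (by positivity) ?_
  rw [div_mul_eq_mul_div, div_le_iff₀ (by positivity)]
  nlinarith [pi_pos]

theorem dirichletMode_one_pos {k : ℕ} (hk : 1 ≤ k) : 0 < dirichletMode k 1 := by
  have hk' : (1 : ℝ) ≤ k := by exact_mod_cast hk
  refine Real.sin_pos_of_pos_of_lt_pi (by simp; positivity) ?_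
  rw [Int.cast_one, abs_one, mul_one, div_lt_iff₀ (by positivity)]
  nlinarith [pi_pos]

theorem dirichletMode_second_diff_le (k : ℕ) (j : ℤ) :
    2 * dirichletMode k j - dirichletMode k (j - 1) - dirichletMode k (j + 1)
      ≤ dirEVZ k * dirichletMode k j := by
  have hsin : 0 ≤ sin (π / (2 * k + 1)) := by
    refine Real.sin_nonneg_of_nonneg_of_le_pi (by positivity) (div_le_self pi_pos.le ?_)
    linarith [(Nat.cast_nonneg k : (0 : ℝ) ≤ k)]
  have h := sin_mul_abs_second_diff_le hsin j
  simpa [dirEVZ, dirichletMode] using h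

theorem Hmat_single0_mulVec_dirichletMode_le {k : ℕ} (hk : 1 ≤ k) (α : ℝ) :
    Hmat k (single0 α) *ᵥ (fun i : Fin (2 * k + 1) => dirichletMode k ((i : ℤ) - k))
      ≤ dirEVZ k • fun i : Fin (2 * k + 1) => dirichletMode k ((i : ℤ) - k) := by
  intro i
  set f : ℤ → ℝ := fun m => dirichletMode k (m - k)
  have h₀ : f (-1) = f 0 := by
    simp only [f]
    rw [show (-1 : ℤ) - k = -(k + 1) by ring, dirichletMode_neg, dirichletMode_succ, zero_sub,
      dirichletMode_neg]
  have h₁ : f ((2 * k + 1 : ℕ) : ℤ) = f ((2 * k + 1 : ℕ) - 1) := by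
    simp only [f]
    push_cast
    rw [show 2 * (k : ℤ) + 1 - k = k + 1 by ring, show 2 * (k : ℤ) + 1 - 1 - k = k by ring,
      dirichletMode_succ]
  have hpot : single0 α ((i : ℤ) - k) * f i = 0 := by
    by_cases hi : (i : ℤ) - k = 0
    · simp only [f, hi, dirichletMode_zero, mul_zero]
    · simp only [single0, hi, if_false, zero_mul]
  rw [Hmat_mulVec_apply, pathLap_mulVec_apply (f := f) (by omega) h₀ h₁, hpot, add_zero]
  have h := dirichletMode_second_diff_le k ((i : ℤ) - k)
  simp only [f, Pi.smul_apply, smul_eq_mul]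
  convert h using 3 <;> ring_nf

theorem lam0_le_dirEVZ_of_isGS {k : ℕ} (hk : 1 ≤ k) {α : ℝ} {φ : Fin (2 * k + 1) → ℝ}
    (hφ : isGS k (single0 α) φ) : lam0 (Hmat k (single0 α)) ≤ dirEVZ k := by
  refine eigenvalue_le_of_mulVec_le (Hmat_isSymm k _) hφ.1 hφ.2.2 (fun i => ?_) ?_
    (Hmat_single0_mulVec_dirichletMode_le hk α)
  · exact dirichletMode_nonneg (abs_le.mpr ⟨by omega, by omega⟩)
  · refine Function.ne_iff.mpr ⟨⟨k + 1, by omega⟩, ?_⟩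
    simpa using (dirichletMode_one_pos hk).ne'

theorem dirEVZ_le_sq (m : ℤ) : dirEVZ m ≤ (π / (2 * m + 1)) ^ 2 := by
  have := Real.one_sub_sq_div_two_le_cos (x := π / (2 * m + 1))
  rw [dirEVZ]
  linarith

theorem sum_le_sqrt_card_of_sum_sq_eq_one {ι : Type*} [Fintype ι] {f : ι → ℝ}
    (hf : ∑ i, f i ^ 2 = 1) : ∑ i, f i ≤ √(Fintype.card ι) := by
  have h := sq_sum_le_card_mul_sum_sq (s := univ) (f := f)
  rw [hf, mul_one, card_univ] at h
  exact (le_abs_self _).trans (Real.abs_le_sqrt h)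

theorem isGS_single0_mul_apply_idx_zero {k : ℕ} (hk : 1 ≤ k) {α : ℝ} {φ : Fin (2 * k + 1) → ℝ}
    (hφ : isGS k (single0 α) φ) : α * φ (idx k 0) = lam0 (Hmat k (single0 α)) * ∑ i, φ i := by
  rw [← sum_single0_mul, ← sum_Hmat_mulVec hk, hφ.1, mul_sum]
  rfl

theorem pi_div_sq_mul_sqrt_le {k : ℕ} (hk : 1 ≤ k) :
    (π / (2 * k + 1)) ^ 2 * √(2 * k + 1) ≤ π ^ 2 * ((k : ℝ) ^ ((3 : ℝ) / 2))⁻¹ := by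
  set N : ℝ := 2 * k + 1
  have hk' : (0 : ℝ) < k := by exact_mod_cast hk
  have hN : (k : ℝ) ≤ N := by simp only [N]; linarith
  have hN32 : N ^ ((3 : ℝ) / 2) = N * √N := by
    rw [show (3 : ℝ) / 2 = 1 + 1 / 2 by norm_num, Real.rpow_add (by positivity), Real.rpow_one,
      Real.sqrt_eq_rpow]
  have hk32 : (k : ℝ) ^ ((3 : ℝ) / 2) ≤ N * √N :=
    hN32 ▸ Real.rpow_le_rpow hk'.le hN (by norm_num)
  have hsqrt : √N * √N = N := Real.mul_self_sqrt (by positivity)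
  calc (π / N) ^ 2 * √N = π ^ 2 * √N / (N * (√N * √N)) := by
        rw [hsqrt]
        field_simp
    _ = π ^ 2 * (N * √N)⁻¹ := by
        field_simp
    _ ≤ π ^ 2 * ((k : ℝ) ^ ((3 : ℝ) / 2))⁻¹ := by
        gcongr

/-- Remark 3.2: for `H_{k,α} = L_k + α δ_0` with `α > 0`, there is `c > 0`
such that for all but finitely many `k` the normalized positive ground state satisfies
`φ_k(0) ≤ c α⁻¹ k^{-3/2}`. -/
theorem stmt14 (α : ℝ) (hα : 0 < α) :
    ∃ c : ℝ, 0 < c ∧ ∀ᶠ k : ℕ in atTop, ∀ φ : Fin (2*k+1) → ℝ, isGS k (single0 α) φ →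
      φ (idx k 0) ≤ c * α⁻¹ * ((k : ℝ) ^ ((3 : ℝ)/2))⁻¹ := by
  refine ⟨π ^ 2, by positivity, eventually_atTop.mpr ⟨1, fun k hk φ hφ => ?_⟩⟩
  have hsum_nonneg : 0 ≤ ∑ i, φ i := sum_nonneg fun i _ => (hφ.2.2 i).le
  have hsum : ∑ i, φ i ≤ √(2 * k + 1) := by
    simpa using sum_le_sqrt_card_of_sum_sq_eq_one hφ.2.1
  have hlam : lam0 (Hmat k (single0 α)) ≤ (π / (2 * k + 1)) ^ 2 := by
    simpa using (lam0_le_dirEVZ_of_isGS hk hφ).trans (dirEVZ_le_sq k)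
  calc φ (idx k 0) = α⁻¹ * (lam0 (Hmat k (single0 α)) * ∑ i, φ i) := by
        rw [← isGS_single0_mul_apply_idx_zero hk hφ, inv_mul_cancel_left₀ hα.ne']
    _ ≤ α⁻¹ * ((π / (2 * k + 1)) ^ 2 * √(2 * k + 1)) := by
        gcongr
    _ ≤ α⁻¹ * (π ^ 2 * ((k : ℝ) ^ ((3 : ℝ) / 2))⁻¹) :=
        mul_le_mul_of_nonneg_left (pi_div_sq_mul_sqrt_le hk) (by positivity)
    _ = π ^ 2 * α⁻¹ * ((k : ℝ) ^ ((3 : ℝ) / 2))⁻¹ := by ring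
end

section
/- Upper bound for the ground state energy via a trial state (Theorem 3.4): λ_0(V_k, α) ≤ (1/2)(1 - b_k)(λ_0(V_{k+r_min}, ∞δ_0) + λ_0(V_{k-r_max}, ∞δ_0)) + b_k c_k², where c_k² = λ_0(V_k, ∞δ_0)/(2+ε) for arbitrary ε > 0 and b_k ∈ (0,1] is determined by normalizing the trial state ψ_k(j) = (1-b_k)^{1/2}( cos-profile on the left segment + cos-profile on the right segment ) + (Σα_j)^{-1/2} b_k^{1/2} c_k. -/
open Finset Filter Topology Matrix

/-!
The trial state is a constant on the support `[r_min, r_max]` of the potential plus two cosine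
profiles on the free segments `{-k, …, r_min}` and `{r_max, …, k}`. Each profile is the ground
state of its segment with a free end at the boundary of the path and a Dirichlet condition at
`r_min` (resp. `r_max`), so its kinetic energy is `dirEVZ` of the segment length times its
squared norm. The profiles vanish on `[r_min, r_max]`, so their kinetic energies add and the
potential only sees the constant; the Rayleigh quotient of the normalized trial state bounds `λ₀`.
-/

open Real

theorem evs_eq_spectrum {n : ℕ} (M : Matrix (Fin n) (Fin n) ℝ) : evs M = spectrum ℝ M := by
  ext μ
  rw [← Matrix.spectrum_toLin', ← Module.End.hasEigenvalue_iff_mem_spectrum,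
    Module.End.hasEigenvalue_iff, Submodule.ne_bot_iff]
  simp only [Module.End.mem_eigenspace_iff, Matrix.toLin'_apply]
  exact ⟨fun ⟨f, hf, h⟩ => ⟨f, h, hf⟩, fun ⟨f, h, hf⟩ => ⟨f, hf, h⟩⟩

theorem lam0_mul_dotProduct_self_le {n : ℕ} {M : Matrix (Fin n) (Fin n) ℝ} (hM : M.IsHermitian)
    (v : Fin n → ℝ) : lam0 M * (v ⬝ᵥ v) ≤ v ⬝ᵥ M *ᵥ v := by
  have hshift : (M - algebraMap ℝ (Matrix (Fin n) (Fin n) ℝ) (lam0 M)).PosSemidef := by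
    refine Matrix.posSemidef_iff_isHermitian_and_spectrum_nonneg.mpr
      ⟨hM.sub (by rw [Matrix.algebraMap_eq_diagonal]; exact Matrix.isHermitian_diagonal _), ?_⟩
    rw [← spectrum.sub_singleton_eq]
    rintro _ ⟨μ, hμ, _, rfl, rfl⟩
    rw [lam0, evs_eq_spectrum]
    exact sub_nonneg.mpr (csInf_le M.finite_spectrum.bddBelow hμ)
  have := (Matrix.posSemidef_iff_dotProduct_mulVec.mp hshift).2 v
  simp only [star_trivial, Matrix.sub_mulVec, dotProduct_sub, Algebra.algebraMap_eq_smul_one,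
    Matrix.smul_mulVec, Matrix.one_mulVec, dotProduct_smul, smul_eq_mul] at this
  linarith

def pathInc (n : ℕ) : Matrix (Fin n) (Fin (n + 1)) ℝ :=
  Matrix.of fun i j => (if j = i.succ then 1 else 0) - (if j = i.castSucc then 1 else 0)

theorem pathInc_mulVec (n : ℕ) (f : Fin (n + 1) → ℝ) (i : Fin n) :
    (pathInc n *ᵥ f) i = f i.succ - f i.castSucc := by
  simp [pathInc, Matrix.mulVec, dotProduct, sub_mul]

theorem sum_range_incidence_mul (n a b : ℕ) :
    ∑ i ∈ range n, ((if a = i + 1 then 1 else 0) - (if a = i then 1 else 0)) *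
        ((if b = i + 1 then 1 else 0) - (if b = i then 1 else 0) : ℝ) =
      if a = b then (if 1 ≤ a ∧ a ≤ n then 1 else 0) + (if a < n then 1 else 0)
      else if (a + 1 = b ∨ b + 1 = a) ∧ max a b ≤ n then -1 else 0 := by
  induction n with
  | zero => simp only [range_zero, sum_empty]; split_ifs <;> first | omega | norm_num
  | succ n ih =>
    rw [sum_range_succ, ih]
    split_ifs <;> first | omega | norm_num

theorem pathLap_eq_transpose_mul (n : ℕ) (hn : 0 < n) :
    pathLap (n + 1) = (pathInc n)ᵀ * pathInc n := by
  ext a b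
  have key := sum_range_incidence_mul n a b
  rw [← Fin.sum_univ_eq_sum_range (fun i => ((if (a : ℕ) = i + 1 then 1 else 0) -
      (if (a : ℕ) = i then 1 else 0)) * ((if (b : ℕ) = i + 1 then 1 else 0) -
      (if (b : ℕ) = i then 1 else 0) : ℝ))] at key
  simp only [Matrix.mul_apply, Matrix.transpose_apply, pathInc, Matrix.of_apply, Fin.ext_iff,
    Fin.val_succ, Fin.val_castSucc, key, pathLap]
  have := a.isLt
  have := b.isLt
  split_ifs <;> first | omega | norm_num

theorem dotProduct_pathLap_mulVec (n : ℕ) (hn : 0 < n) (f : Fin (n + 1) → ℝ) :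
    f ⬝ᵥ pathLap (n + 1) *ᵥ f = ∑ i : Fin n, (f i.succ - f i.castSucc) ^ 2 := by
  rw [pathLap_eq_transpose_mul n hn, ← Matrix.mulVec_mulVec, Matrix.dotProduct_mulVec,
    Matrix.vecMul_transpose, dotProduct]
  simp only [pathInc_mulVec, sq]

theorem isHermitian_pathLap (n : ℕ) : (pathLap n).IsHermitian := by
  refine Matrix.isHermitian_iff_isSymm.mpr (Matrix.IsSymm.ext fun i j => ?_)
  rcases eq_or_ne i j with rfl | hij
  · rfl
  · simp only [pathLap, Matrix.of_apply, if_neg hij, if_neg hij.symm, or_comm]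

theorem isHermitian_Hmat (k : ℕ) (α : ℤ → ℝ) : (Hmat k α).IsHermitian :=
  (isHermitian_pathLap _).add (Matrix.isHermitian_diagonal _)

theorem sum_fin_eq_sum_Ico (n : ℕ) (a : ℤ) (g : ℤ → ℝ) :
    ∑ i : Fin n, g (i - a) = ∑ j ∈ Ico (-a) (n - a), g j := by
  rw [Fin.sum_univ_eq_sum_range (fun i => g (i - a))]
  refine sum_nbij' (fun i => i - a) (fun j => (j + a).toNat) ?_ ?_ ?_ ?_ ?_ <;>
    intro x hx <;> simp only [mem_range, mem_Ico] at hx ⊢ <;> omega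

theorem dotProduct_Hmat_mulVec (k : ℕ) (hk : 0 < k) (α W : ℤ → ℝ) :
    (fun i : Fin (2 * k + 1) => W (i - k)) ⬝ᵥ Hmat k α *ᵥ (fun i => W (i - k)) =
      ∑ j ∈ Ico (-(k : ℤ)) k, (W (j + 1) - W j) ^ 2 + ∑ j ∈ Icc (-(k : ℤ)) k, α j * W j ^ 2 := by
  rw [Hmat, Matrix.add_mulVec, dotProduct_add, dotProduct_pathLap_mulVec _ (by omega), potMat]
  congr 1
  · convert sum_fin_eq_sum_Ico (2 * k) k (fun j => (W (j + 1) - W j) ^ 2) using 3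
    · simp only [Fin.val_succ, Fin.val_castSucc]; push_cast; ring_nf
    · push_cast; ring
  · simp only [dotProduct, Matrix.mulVec_diagonal]
    convert sum_fin_eq_sum_Ico (2 * k + 1) k (fun j => α j * W j ^ 2) using 2
    · ring
    · rw [← Ico_add_one_right_eq_Icc]; push_cast; ring_nf

theorem lam0_Hmat_le (k : ℕ) (hk : 0 < k) (α W : ℤ → ℝ)
    (hW : ∑ i : Fin (2 * k + 1), W (i - k) ^ 2 = 1) :
    lam0 (Hmat k α) ≤
      ∑ j ∈ Ico (-(k : ℤ)) k, (W (j + 1) - W j) ^ 2 + ∑ j ∈ Icc (-(k : ℤ)) k, α j * W j ^ 2 := by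
  have h := lam0_mul_dotProduct_self_le (isHermitian_Hmat k α) (fun i => W (i - k))
  simp only [dotProduct, ← sq] at h
  rwa [hW, mul_one, ← dotProduct, dotProduct_Hmat_mulVec k hk] at h

theorem dirEVZ_nonneg (m : ℤ) : 0 ≤ dirEVZ m := by
  rw [dirEVZ]
  linarith [cos_le_one (π / (2 * m + 1))]

theorem sq_cos_add_sub_cos (x θ : ℝ) :
    (cos (x + θ) - cos x) ^ 2 = (2 - 2 * cos θ) * sin (x + θ / 2) ^ 2 := by
  have hsin : 2 - 2 * cos θ = 4 * sin (θ / 2) ^ 2 := by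
    rw [sin_sq_eq_half_sub, mul_div_cancel₀ θ two_ne_zero]; ring
  rw [cos_sub_cos, hsin]
  ring_nf

/-- The paper's cos-profile: the ground state of the path `{p, …, p + m}` with a free end at `p`
and a Dirichlet end at `p + m` (where its phase is `π / 2`), extended by zero. -/
noncomputable def cosProfile (a : ℝ) (p m j : ℤ) : ℝ :=
  if p ≤ j ∧ j ≤ p + m then a * cos ((j - p + 1 / 2) * π / (2 * m + 1)) else 0

theorem cosProfile_neg_add_apply (a : ℝ) (k : ℕ) (r j : ℤ) :
    cosProfile a (-k) (k + r) j =
      if -(k : ℤ) ≤ j ∧ j ≤ r then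
        a * cos (((j : ℝ) + k + 1 / 2) * π / (2 * ((k : ℝ) + r) + 1))
      else 0 := by
  rw [cosProfile]
  push_cast
  exact if_congr (by omega) (by ring_nf) rfl

theorem cosProfile_neg_sub_apply_neg (a : ℝ) (k : ℕ) (r j : ℤ) :
    cosProfile a (-k) (k - r) (-j) =
      if r ≤ j ∧ j ≤ (k : ℤ) then
        a * cos (((k : ℝ) - j + 1 / 2) * π / (2 * ((k : ℝ) - r) + 1))
      else 0 := by
  rw [cosProfile]
  push_cast
  exact if_congr (by omega) (by ring_nf) rfl

theorem cosProfile_eq_zero_of_le {a : ℝ} {p m j : ℤ} (hj : p + m ≤ j) :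
    cosProfile a p m j = 0 := by
  unfold cosProfile
  split_ifs with h
  · have hjm : j = p + m := by omega
    have hden : (2 * m + 1 : ℝ) ≠ 0 := by
      have : (0 : ℤ) ≤ m := by omega
      positivity
    have hphase : ((j : ℝ) - p + 1 / 2) * π / (2 * m + 1) = π / 2 := by
      rw [hjm, div_eq_iff hden]; push_cast; ring
    rw [hphase, cos_pi_div_two, mul_zero]
  · rfl

/-- Since the phase at `p + m` is `π / 2`, the sine produced by the difference of consecutive
cosines is the profile at the reflected site. -/
theorem sq_sub_cosProfile {a : ℝ} {p m j : ℤ} (hj : j ∈ Ico p (p + m)) :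
    (cosProfile a p m (j + 1) - cosProfile a p m j) ^ 2 =
      dirEVZ m * cosProfile a p m (2 * p + m - 1 - j) ^ 2 := by
  rw [mem_Ico] at hj
  have hden : (2 * m + 1 : ℝ) ≠ 0 := by
    have : (0 : ℤ) ≤ m := by omega
    positivity
  have hx : ((j + 1 : ℤ) - p + 1 / 2 : ℝ) * π / (2 * m + 1) =
      (j - p + 1 / 2) * π / (2 * m + 1) + π / (2 * m + 1) := by
    push_cast; ring
  have hy : ((2 * p + m - 1 - j : ℤ) - p + 1 / 2 : ℝ) * π / (2 * m + 1) =
      π / 2 - ((j - p + 1 / 2) * π / (2 * m + 1) + π / (2 * m + 1) / 2) := by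
    push_cast; field_simp; ring
  unfold cosProfile
  rw [if_pos (by omega), if_pos (by omega), if_pos (by omega), hx, hy, ← mul_sub, mul_pow,
    sq_cos_add_sub_cos, cos_pi_div_two_sub, dirEVZ]
  ring

theorem sum_sq_sub_cosProfile (a : ℝ) {p m q : ℤ} (hq : p + m ≤ q) :
    ∑ j ∈ Ico p q, (cosProfile a p m (j + 1) - cosProfile a p m j) ^ 2 =
      dirEVZ m * ∑ j ∈ Icc p q, cosProfile a p m j ^ 2 := by
  have hsub : Ico p (p + m) ⊆ Ico p q := Ico_subset_Ico_right hq
  calc ∑ j ∈ Ico p q, (cosProfile a p m (j + 1) - cosProfile a p m j) ^ 2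
      = ∑ j ∈ Ico p (p + m), (cosProfile a p m (j + 1) - cosProfile a p m j) ^ 2 := by
        refine (sum_subset hsub fun j hjq hj => ?_).symm
        simp only [mem_Ico, not_and, not_lt] at hjq hj
        rw [cosProfile_eq_zero_of_le (by omega), cosProfile_eq_zero_of_le (by omega)]
        ring
    _ = ∑ j ∈ Ico p (p + m), dirEVZ m * cosProfile a p m (2 * p + m - 1 - j) ^ 2 :=
        sum_congr rfl fun j hj => sq_sub_cosProfile hj
    _ = dirEVZ m * ∑ j ∈ Ico p (p + m), cosProfile a p m j ^ 2 := by
        rw [← mul_sum]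
        congr 1
        refine sum_nbij' (fun j => 2 * p + m - 1 - j) (fun j => 2 * p + m - 1 - j)
          ?_ ?_ ?_ ?_ ?_ <;> intro x hx <;> simp only [mem_Ico] at hx ⊢ <;> omega
    _ = dirEVZ m * ∑ j ∈ Icc p q, cosProfile a p m j ^ 2 := by
        refine congrArg _ (sum_subset (fun j hj => ?_) fun j hj hj' => ?_)
        · simp only [mem_Ico, mem_Icc] at hj ⊢; omega
        · simp only [mem_Ico, mem_Icc, not_and, not_lt] at hj hj'
          rw [cosProfile_eq_zero_of_le (by omega), sq, zero_mul]

theorem sum_sq_sub_cosProfile_neg (a : ℝ) {p m q : ℤ} (hp : p ≤ q - m) :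
    ∑ j ∈ Ico p q, (cosProfile a (-q) m (-(j + 1)) - cosProfile a (-q) m (-j)) ^ 2 =
      dirEVZ m * ∑ j ∈ Icc p q, cosProfile a (-q) m (-j) ^ 2 := by
  have hIco : ∑ j ∈ Ico p q, (cosProfile a (-q) m (-(j + 1)) - cosProfile a (-q) m (-j)) ^ 2 =
      ∑ j ∈ Ico (-q) (-p), (cosProfile a (-q) m (j + 1) - cosProfile a (-q) m j) ^ 2 := by
    refine sum_nbij' (fun j => -(j + 1)) (fun j => -(j + 1)) ?_ ?_ ?_ ?_ ?_ <;>
      intro x hx <;> simp only [mem_Ico] at hx ⊢ <;> try omega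
    rw [neg_add', sub_add_cancel, ← neg_sq, neg_sub]
  have hIcc : ∑ j ∈ Icc p q, cosProfile a (-q) m (-j) ^ 2 =
      ∑ j ∈ Icc (-q) (-p), cosProfile a (-q) m j ^ 2 := by
    refine sum_nbij' (fun j => -j) (fun j => -j) ?_ ?_ ?_ ?_ ?_ <;>
      intro x hx <;> simp only [mem_Icc, neg_neg] at hx ⊢ <;> omega
  rw [hIco, hIcc, sum_sq_sub_cosProfile a (by omega)]

theorem sum_mul_sq_of_support_subset {ι : Type*} {α W : ι → ℝ} {J T : Finset ι} {s : ℝ}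
    (hJT : J ⊆ T) (hα : ∀ j ∉ J, α j = 0) (hW : ∀ j ∈ J, W j = s) :
    ∑ j ∈ T, α j * W j ^ 2 = (∑ j ∈ J, α j) * s ^ 2 := by
  rw [← sum_subset hJT fun j _ hj => by rw [hα j hj, zero_mul], sum_mul]
  exact sum_congr rfl fun j hj => by rw [hW j hj]

theorem sum_sq_sub_of_separated {f g : ℤ → ℝ} {r : ℤ} (hf : ∀ j, r ≤ j → f j = 0)
    (hg : ∀ j, j ≤ r → g j = 0) (c s : ℝ) (S : Finset ℤ) :
    ∑ j ∈ S, ((c * (f (j + 1) + g (j + 1)) + s) - (c * (f j + g j) + s)) ^ 2 =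
      c ^ 2 * (∑ j ∈ S, (f (j + 1) - f j) ^ 2 + ∑ j ∈ S, (g (j + 1) - g j) ^ 2) := by
  rw [← sum_add_distrib, mul_sum]
  refine sum_congr rfl fun j _ => ?_
  have hcross : (f (j + 1) - f j) * (g (j + 1) - g j) = 0 := by
    rcases le_or_gt r j with hj | hj
    · rw [hf j hj, hf (j + 1) (by omega)]; ring
    · rw [hg j hj.le, hg (j + 1) (by omega)]; ring
  linear_combination (2 * c ^ 2) * hcross

theorem lam0_Hmat_le_of_separated (k : ℕ) (hk : 0 < k) {α f g : ℤ → ℝ} {J : Finset ℤ}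
    {r₁ r₂ : ℤ} (hr : r₁ ≤ r₂) (hk₁ : -(k : ℤ) ≤ r₁) (hk₂ : r₂ ≤ k)
    (hJ : ∀ j ∈ J, r₁ ≤ j ∧ j ≤ r₂) (hα : ∀ j ∉ J, α j = 0)
    (hf : ∀ j, r₁ ≤ j → f j = 0) (hg : ∀ j, j ≤ r₂ → g j = 0) (c s : ℝ)
    (hW : ∑ i : Fin (2 * k + 1), (c * (f (i - k) + g (i - k)) + s) ^ 2 = 1) :
    lam0 (Hmat k α) ≤
      c ^ 2 * (∑ j ∈ Ico (-(k : ℤ)) k, (f (j + 1) - f j) ^ 2 +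
        ∑ j ∈ Ico (-(k : ℤ)) k, (g (j + 1) - g j) ^ 2) + (∑ j ∈ J, α j) * s ^ 2 := by
  have h := lam0_Hmat_le k hk α (fun j => c * (f j + g j) + s) hW
  rwa [sum_sq_sub_of_separated hf (fun j hj => hg j (hj.trans hr)),
    sum_mul_sq_of_support_subset (fun j hj => ?_) hα fun j hj => ?_] at h
  · have := hJ j hj; rw [mem_Icc]; omega
  · rw [hf j (hJ j hj).1, hg j (hJ j hj).2]; ring

theorem stmt16_general (α : ℤ → ℝ) (J : Finset ℤ) (hne : J.Nonempty)
    (hsupp : ∀ j : ℤ, α j ≠ 0 ↔ j ∈ J) (hpos : ∀ j ∈ J, 0 < α j)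
    (rmin rmax : ℤ) (hrmin : rmin = J.min' hne) (hrmax : rmax = J.max' hne)
    (ε : ℝ) (hε : 0 < ε)
    (k : ℕ) (hk : max |rmin| |rmax| < (k : ℤ))
    (A B : ℝ) (cL cR : ℤ → ℝ)
    (hcL : ∀ j : ℤ, cL j =
      if -(k : ℤ) ≤ j ∧ j ≤ rmin then
        (Real.sqrt A)⁻¹ *
          Real.cos (((j : ℝ) + (k : ℝ) + 1/2) * Real.pi / (2 * ((k : ℝ) + (rmin : ℝ)) + 1))
      else 0)
    (hcR : ∀ j : ℤ, cR j =
      if rmax ≤ j ∧ j ≤ (k : ℤ) then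
        (Real.sqrt B)⁻¹ *
          Real.cos (((k : ℝ) - (j : ℝ) + 1/2) * Real.pi / (2 * ((k : ℝ) - (rmax : ℝ)) + 1))
      else 0)
    (hnormL : ∑ j ∈ Finset.Icc (-(k : ℤ)) (k : ℤ), cL j ^ 2 = 1/2)
    (hnormR : ∑ j ∈ Finset.Icc (-(k : ℤ)) (k : ℤ), cR j ^ 2 = 1/2)
    (b : ℝ) (hb0 : 0 < b) (hb1 : b ≤ 1)
    (hψ : ∑ i : Fin (2*k+1),
        (Real.sqrt (1 - b) * (cL ((i : ℤ) - k) + cR ((i : ℤ) - k)) +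
          (Real.sqrt (∑ j ∈ J, α j))⁻¹ * Real.sqrt b *
            Real.sqrt (dirEVZ k / (2 + ε))) ^ 2 = 1) :
    lam0 (Hmat k α) ≤
      (1/2) * (1 - b) * (dirEVZ ((k : ℤ) + rmin) + dirEVZ ((k : ℤ) - rmax)) +
        b * (dirEVZ k / (2 + ε)) := by
  obtain ⟨hLlo, hLhi⟩ := abs_lt.mp (lt_of_le_of_lt (le_max_left _ _) hk)
  obtain ⟨hRlo, hRhi⟩ := abs_lt.mp (lt_of_le_of_lt (le_max_right _ _) hk)
  have hJ : ∀ j ∈ J, rmin ≤ j ∧ j ≤ rmax :=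
    fun j hj => ⟨hrmin ▸ J.min'_le j hj, hrmax ▸ J.le_max' j hj⟩
  have hcL' : cL = cosProfile (√A)⁻¹ (-k) (k + rmin) :=
    funext fun j => (hcL j).trans (cosProfile_neg_add_apply _ k rmin j).symm
  have hcR' : cR = fun j => cosProfile (√B)⁻¹ (-k) (k - rmax) (-j) :=
    funext fun j => (hcR j).trans (cosProfile_neg_sub_apply_neg _ k rmax j).symm
  have hkinL : ∑ j ∈ Ico (-(k : ℤ)) k, (cL (j + 1) - cL j) ^ 2 = dirEVZ (k + rmin) / 2 := by
    rw [hcL'] at hnormL ⊢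
    rw [sum_sq_sub_cosProfile _ (by omega), hnormL, mul_one_div]
  have hkinR : ∑ j ∈ Ico (-(k : ℤ)) k, (cR (j + 1) - cR j) ^ 2 = dirEVZ (k - rmax) / 2 := by
    rw [hcR'] at hnormR ⊢
    rw [sum_sq_sub_cosProfile_neg _ (by omega), hnormR, mul_one_div]
  have hpot : (∑ j ∈ J, α j) * ((√(∑ j ∈ J, α j))⁻¹ * √b * √(dirEVZ k / (2 + ε))) ^ 2 =
      b * (dirEVZ k / (2 + ε)) := by
    rw [mul_pow, mul_pow, inv_pow, sq_sqrt (sum_pos hpos hne).le, sq_sqrt hb0.le,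
      sq_sqrt (div_nonneg (dirEVZ_nonneg k) (by linarith))]
    field_simp [(sum_pos hpos hne).ne']
  have hbound := lam0_Hmat_le_of_separated k (by omega) (hJ _ (hrmin ▸ J.min'_mem hne)).2
    (by omega) (by omega) hJ (fun j hj => not_ne_iff.mp (mt (hsupp j).mp hj))
    (fun j hj => by rw [hcL']; exact cosProfile_eq_zero_of_le (by omega))
    (fun j hj => by rw [hcR']; exact cosProfile_eq_zero_of_le (by omega)) _ _ hψ
  rw [hkinL, hkinR, hpot, sq_sqrt (by linarith)] at hbound
  linarith

/-- upper bound for the ground state energy, Theorem 3.4: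
`λ_0(V_k, α) ≤ (1/2)(1-b_k)(λ_0(V_{k+r_min}, ∞δ_0) + λ_0(V_{k-r_max}, ∞δ_0)) + b_k c_k²`,
where `c_k² = λ_0(V_k, ∞δ_0)/(2+ε)` and `b_k ∈ (0,1]` normalizes the trial state
`ψ_k(j) = (1-b_k)^{1/2}(cos-profile left + cos-profile right) + (Σα_j)^{-1/2} b_k^{1/2} c_k`. -/
theorem stmt16 (α : ℤ → ℝ) (J : Finset ℤ) (hne : J.Nonempty)
    (hsupp : ∀ j : ℤ, α j ≠ 0 ↔ j ∈ J) (hpos : ∀ j ∈ J, 0 < α j)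
    (rmin rmax : ℤ) (hrmin : rmin = J.min' hne) (hrmax : rmax = J.max' hne)
    (ε : ℝ) (hε : 0 < ε)
    (k : ℕ) (hk : max |rmin| |rmax| < (k : ℤ))
    (A B : ℝ) (hA : 0 < A) (hB : 0 < B) (cL cR : ℤ → ℝ)
    (hcL : ∀ j : ℤ, cL j =
      if -(k : ℤ) ≤ j ∧ j ≤ rmin then
        (Real.sqrt A)⁻¹ *
          Real.cos (((j : ℝ) + (k : ℝ) + 1/2) * Real.pi / (2 * ((k : ℝ) + (rmin : ℝ)) + 1))
      else 0)
    (hcR : ∀ j : ℤ, cR j =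
      if rmax ≤ j ∧ j ≤ (k : ℤ) then
        (Real.sqrt B)⁻¹ *
          Real.cos (((k : ℝ) - (j : ℝ) + 1/2) * Real.pi / (2 * ((k : ℝ) - (rmax : ℝ)) + 1))
      else 0)
    (hnormL : ∑ j ∈ Finset.Icc (-(k : ℤ)) (k : ℤ), cL j ^ 2 = 1/2)
    (hnormR : ∑ j ∈ Finset.Icc (-(k : ℤ)) (k : ℤ), cR j ^ 2 = 1/2)
    (b : ℝ) (hb0 : 0 < b) (hb1 : b ≤ 1)
    (hψ : ∑ i : Fin (2*k+1),
        (Real.sqrt (1 - b) * (cL ((i : ℤ) - k) + cR ((i : ℤ) - k)) +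
          (Real.sqrt (∑ j ∈ J, α j))⁻¹ * Real.sqrt b *
            Real.sqrt (dirEVZ k / (2 + ε))) ^ 2 = 1) :
    lam0 (Hmat k α) ≤
      (1/2) * (1 - b) * (dirEVZ ((k : ℤ) + rmin) + dirEVZ ((k : ℤ) - rmax)) +
        b * (dirEVZ k / (2 + ε)) :=
  stmt16_general α J hne hsupp hpos rmin rmax hrmin hrmax ε hε k hk A B cL cR hcL hcR hnormL hnormR
    b hb0 hb1 hψ
end
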